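/- arXiv:2110.14905 — 3 statements merged into one kernel-verified Lean document; each statement's English description precedes it below -/
import Mathlib

section
/- Let X be a convex polyomino such that V(X) ⊆ ℕ² is a sublattice of ℕ² with minimum (0,0) and maximum (m,n), and fix an injective order-preserving map ω from JI(X) to ℕ. Then for every k ∈ ℕ, the number |M_k(X)| of maximal chains of V(X) with exactly k descents is at most r_k, the number of k-rook configurations in X. -/
/-!  Cells in ℤ² are identified with their top-right corners: the cell `C v`
is the unit square `[v.1 - 1, v.1] × [v.2 - 1, v.2] ⊆ ℝ²`. -/

/-- Two cells (identified by their top-right corners) are adjacent if they share an edge. -/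
def Adj (c d : ℤ × ℤ) : Prop :=
  (c.1 = d.1 ∧ (c.2 = d.2 + 1 ∨ d.2 = c.2 + 1)) ∨
  (c.2 = d.2 ∧ (c.1 = d.1 + 1 ∨ d.1 = c.1 + 1))

/-- A polyomino: a nonempty finite set of cells, connected under adjacency. -/
def IsPolyomino (X : Finset (ℤ × ℤ)) : Prop :=
  X.Nonempty ∧ ∀ c ∈ X, ∀ d ∈ X,
    Relation.ReflTransGen (fun a b => a ∈ X ∧ b ∈ X ∧ Adj a b) c d

/-- A polyomino is convex if it is both row-convex and column-convex. -/
def IsConvexPoly (X : Finset (ℤ × ℤ)) : Prop :=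
  (∀ a b x y : ℤ, (a, y) ∈ X → (b, y) ∈ X → a ≤ x → x ≤ b → (x, y) ∈ X) ∧
  (∀ a b x y : ℤ, (y, a) ∈ X → (y, b) ∈ X → a ≤ x → x ≤ b → (y, x) ∈ X)

/-- `X` is thin if it contains no 2 × 2 block of four cells. -/
def IsThin (X : Finset (ℤ × ℤ)) : Prop :=
  ¬ ∃ w : ℤ × ℤ, w ∈ X ∧ w + ((1, 0) : ℤ × ℤ) ∈ X ∧
    w + ((0, 1) : ℤ × ℤ) ∈ X ∧ w + ((1, 1) : ℤ × ℤ) ∈ X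

/-- `X` is `L`-convex: convex, and any two cells are joined by a monotone path of cells
of `X` changing direction (horizontal to vertical or vice versa) at most once. -/
def IsLConvexPoly (X : Finset (ℤ × ℤ)) : Prop :=
  IsConvexPoly X ∧ ∀ c ∈ X, ∀ d ∈ X,
    ((∀ x : ℤ, min c.1 d.1 ≤ x → x ≤ max c.1 d.1 → ((x, c.2) : ℤ × ℤ) ∈ X) ∧
     (∀ y : ℤ, min c.2 d.2 ≤ y → y ≤ max c.2 d.2 → ((d.1, y) : ℤ × ℤ) ∈ X)) ∨
    ((∀ y : ℤ, min c.2 d.2 ≤ y → y ≤ max c.2 d.2 → ((c.1, y) : ℤ × ℤ) ∈ X) ∧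
     (∀ x : ℤ, min c.1 d.1 ≤ x → x ≤ max c.1 d.1 → ((x, d.2) : ℤ × ℤ) ∈ X))

/-- The vertex set `V(X)`: all corners of cells of `X`, partially ordered componentwise. -/
def Verts (X : Finset (ℤ × ℤ)) : Set (ℤ × ℤ) :=
  {v | ∃ c ∈ X, v = c ∨ v = c - ((1, 0) : ℤ × ℤ) ∨
    v = c - ((0, 1) : ℤ × ℤ) ∨ v = c - ((1, 1) : ℤ × ℤ)}

/-- Setup: `V(X) ⊆ ℕ²` is a sublattice of `ℕ²` (closed under componentwise max and min)
with minimum `(0,0)` and maximum `(m,n)`. -/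
def LatticeSetup (X : Finset (ℤ × ℤ)) (m n : ℕ) : Prop :=
  (∀ a ∈ Verts X, ∀ b ∈ Verts X, a ⊔ b ∈ Verts X ∧ a ⊓ b ∈ Verts X) ∧
  ((0, 0) : ℤ × ℤ) ∈ Verts X ∧ (((m : ℤ), (n : ℤ)) : ℤ × ℤ) ∈ Verts X ∧
  ∀ v ∈ Verts X, ((0, 0) : ℤ × ℤ) ≤ v ∧ v ≤ (((m : ℤ), (n : ℤ)) : ℤ × ℤ)

/-- Join-irreducible elements of the lattice `V(X)`: nonminimal elements that are not
the join of two elements strictly below them. -/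
def JoinIrr (X : Finset (ℤ × ℤ)) : Set (ℤ × ℤ) :=
  {p | p ∈ Verts X ∧ (∃ q ∈ Verts X, q < p) ∧
    ∀ a ∈ Verts X, ∀ b ∈ Verts X, a < p → b < p → a ⊔ b ≠ p}

/-- `ω` is an injective order-preserving map from `JI(X)` to `ℕ`. -/
def OmegaOK (X : Finset (ℤ × ℤ)) (ω : ℤ × ℤ → ℕ) : Prop :=
  Set.InjOn ω (JoinIrr X) ∧
  ∀ p ∈ JoinIrr X, ∀ q ∈ JoinIrr X, p ≤ q → ω p ≤ ω q

/-- A maximal chain of `V(X)`, written as a monotone unit lattice path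
`μ 0 = (0,0) < μ 1 < ⋯ < μ (m+n) = (m,n)` through vertices of `X`
(normalized by `μ i = (m,n)` for `i ≥ m+n`). -/
def IsMaxChainPath (X : Finset (ℤ × ℤ)) (m n : ℕ) (μ : ℕ → ℤ × ℤ) : Prop :=
  μ 0 = (0, 0) ∧
  (∀ i, i < m + n → μ (i + 1) - μ i = ((1, 0) : ℤ × ℤ) ∨
    μ (i + 1) - μ i = ((0, 1) : ℤ × ℤ)) ∧
  (∀ i, m + n ≤ i → μ i = (((m : ℤ), (n : ℤ)) : ℤ × ℤ)) ∧
  (∀ i, i ≤ m + n → μ i ∈ Verts X)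

/-- `i` is a descent of the maximal chain `μ`:  `ω p_i > ω p_{i+1}`, where `p_j` is the
unique join-irreducible `p` with `p ≤ μ j` and `p ≰ μ (j-1)`. -/
def DescentAt (X : Finset (ℤ × ℤ)) (ω : ℤ × ℤ → ℕ) (μ : ℕ → ℤ × ℤ) (i : ℕ) : Prop :=
  ∃ p ∈ JoinIrr X, ∃ q ∈ JoinIrr X,
    p ≤ μ i ∧ ¬ p ≤ μ (i - 1) ∧ q ≤ μ (i + 1) ∧ ¬ q ≤ μ i ∧ ω q < ω p

/-- The descent set of a maximal chain: descents `i` with `1 ≤ i ≤ m+n-1`. -/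
def Des (X : Finset (ℤ × ℤ)) (m n : ℕ) (ω : ℤ × ℤ → ℕ) (μ : ℕ → ℤ × ℤ) : Set ℕ :=
  {i | 1 ≤ i ∧ i < m + n ∧ DescentAt X ω μ i}

/-- `|M_k(X)|`: the number of maximal chains of `V(X)` with exactly `k` descents. -/
noncomputable def numChains (X : Finset (ℤ × ℤ)) (m n : ℕ) (ω : ℤ × ℤ → ℕ) (k : ℕ) : ℕ :=
  Set.ncard {μ : ℕ → ℤ × ℤ | IsMaxChainPath X m n μ ∧ (Des X m n ω μ).ncard = k}

/-- A `k`-rook configuration in `X`: `k` cells of `X`, no two in the same row or column. -/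
def IsRookConfig (X : Finset (ℤ × ℤ)) (k : ℕ) (S : Finset (ℤ × ℤ)) : Prop :=
  ↑S ⊆ (↑X : Set (ℤ × ℤ)) ∧ S.card = k ∧
  ∀ c ∈ S, ∀ d ∈ S, c ≠ d → c.1 ≠ d.1 ∧ c.2 ≠ d.2

/-- `r_k`: the number of `k`-rook configurations in `X`. -/
noncomputable def rook (X : Finset (ℤ × ℤ)) (k : ℕ) : ℕ :=
  Set.ncard {S : Finset (ℤ × ℤ) | IsRookConfig X k S}

/-- The map `ψ`: sends a maximal chain `μ` to the set of cells `C (μ (i+1))` for `i ∈ Des μ`. -/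
def psi (X : Finset (ℤ × ℤ)) (m n : ℕ) (ω : ℤ × ℤ → ℕ) (μ : ℕ → ℤ × ℤ) :
    Set (ℤ × ℤ) :=
  (fun i => μ (i + 1)) '' Des X m n ω μ

/-- The ideal `I_X` of the polyomino ring: generated by the inner 2-minors
`x_a x_b - x_c x_d` for intervals `[a,b]` of `V(X)`. -/
noncomputable def polyominoIdeal (kk : Type*) [Field kk] (X : Finset (ℤ × ℤ)) :
    Ideal (MvPolynomial (Verts X) kk) :=
  Ideal.span {f | ∃ a b c d : Verts X,
    (a : ℤ × ℤ) < (b : ℤ × ℤ) ∧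
    (c : ℤ × ℤ) = (((a : ℤ × ℤ).1, (b : ℤ × ℤ).2) : ℤ × ℤ) ∧
    (d : ℤ × ℤ) = (((b : ℤ × ℤ).1, (a : ℤ × ℤ).2) : ℤ × ℤ) ∧
    f = MvPolynomial.X a * MvPolynomial.X b - MvPolynomial.X c * MvPolynomial.X d}

/-- `dim_k (k[X])_i`: the dimension of the degree-`i` graded component of `k[X] = R/I_X`,
realized as the image of the homogeneous degree-`i` part of `R` in the quotient. -/
noncomputable def hilbCoeff (kk : Type*) [Field kk] (X : Finset (ℤ × ℤ)) (i : ℕ) : ℕ :=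
  Module.finrank kk (Submodule.map
    (Ideal.Quotient.mkₐ kk (polyominoIdeal kk X)).toLinearMap
    (MvPolynomial.homogeneousSubmodule (Verts X) kk i))

/-- The Hilbert series `HS(t) = Σ_{i ≥ 0} dim_k (k[X])_i t^i ∈ ℤ[[t]]`. -/
noncomputable def hilbSeries (kk : Type*) [Field kk] (X : Finset (ℤ × ℤ)) :
    PowerSeries ℤ :=
  PowerSeries.mk fun i => (hilbCoeff kk X i : ℤ)

/-- The region `⋃ X ⊆ ℝ²` covered by the cells of `X`. -/
def Region (X : Finset (ℤ × ℤ)) : Set (ℝ × ℝ) :=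
  ⋃ c ∈ X, Set.Icc (((c.1 : ℝ) - 1, (c.2 : ℝ) - 1) : ℝ × ℝ) (((c.1 : ℝ), (c.2 : ℝ)) : ℝ × ℝ)

/-- Left-boundary vertices: top-left corners of cells of `X` lying on the topological
boundary of the region `⋃ X ⊆ ℝ²`. -/
def LeftBdry (X : Finset (ℤ × ℤ)) : Set (ℤ × ℤ) :=
  {v | (∃ c ∈ X, v = c - ((1, 0) : ℤ × ℤ)) ∧
    (((v.1 : ℝ), (v.2 : ℝ)) : ℝ × ℝ) ∈ frontier (Region X)}

/-- Bottom-boundary vertices: bottom-right corners of cells of `X` lying on the topological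
boundary of the region `⋃ X ⊆ ℝ²`. -/
def BottomBdry (X : Finset (ℤ × ℤ)) : Set (ℤ × ℤ) :=
  {v | (∃ c ∈ X, v = c - ((0, 1) : ℤ × ℤ)) ∧
    (((v.1 : ℝ), (v.2 : ℝ)) : ℝ × ℝ) ∈ frontier (Region X)}

/-! The label `p_i` of a right step of a maximal chain into column `c` is the least vertex in the
columns `≥ c`, and that of an up step into row `r` the least vertex in the rows `≥ r`. Labels of
right steps, like those of up steps, therefore increase along the chain, so every descent sits at a
right-up or up-right corner. The descent forces the fourth corner of the square at that corner into
`V(X)`, and then convexity forces the square itself into `X`. Two descent cells never share a row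
or a column, so `ψ μ` is a rook configuration with `|Des μ|` rooks. Finally `ψ` is injective: where
two chains first part, the one whose step has the larger label has a descent cell in the new column
(or row) of the other, which the other cannot have. Every statement about rows is obtained from the
one about columns by transposing `X`. -/

section Vertices

variable {X : Finset (ℤ × ℤ)}

lemma mem_verts_iff {v : ℤ × ℤ} : v ∈ Verts X ↔ ∃ c ∈ X, v ≤ c ∧ c ≤ v + (1, 1) := by
  constructor
  · rintro ⟨c, hc, hv⟩
    refine ⟨c, hc, ?_⟩
    rcases hv with rfl | rfl | rfl | rfl <;> simp [Prod.le_def]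
  · rintro ⟨c, hc, hvc, hcv⟩
    simp only [Prod.le_def, Prod.fst_add, Prod.snd_add] at hvc hcv
    refine ⟨c, hc, ?_⟩
    simp only [Prod.ext_iff, Prod.fst_sub, Prod.snd_sub]
    omega

lemma verts_finite (X : Finset (ℤ × ℤ)) : (Verts X).Finite :=
  (X.finite_toSet.biUnion fun c _ => Set.finite_Icc (c - (1, 1)) c).subset fun v hv => by
    obtain ⟨c, hc, hvc, hcv⟩ := mem_verts_iff.1 hv
    exact Set.mem_biUnion hc ⟨sub_le_iff_le_add.2 hcv, hvc⟩

end Vertices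

section Transpose

variable {X : Finset (ℤ × ℤ)} {m n : ℕ} {ω : ℤ × ℤ → ℕ}

def transpose (X : Finset (ℤ × ℤ)) : Finset (ℤ × ℤ) := X.map (Equiv.prodComm ℤ ℤ).toEmbedding

@[simp] lemma mem_transpose {c : ℤ × ℤ} : c ∈ transpose X ↔ c.swap ∈ X := Finset.mem_map_equiv

@[simp] lemma transpose_transpose : transpose (transpose X) = X := by ext; simp

@[simp] lemma mem_verts_transpose {v : ℤ × ℤ} : v ∈ Verts (transpose X) ↔ v.swap ∈ Verts X := by
  simp only [mem_verts_iff, mem_transpose]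
  constructor <;> rintro ⟨c, hc, hvc, hcv⟩
  · exact ⟨c.swap, hc, Prod.swap_le_swap.2 hvc, by simpa using Prod.swap_le_swap.2 hcv⟩
  · refine ⟨c.swap, ?_, ?_, ?_⟩
    · simpa using hc
    · simpa using Prod.swap_le_swap.2 hvc
    · simpa using Prod.swap_le_swap.2 hcv

lemma mem_joinIrr_transpose_of_mem {p : ℤ × ℤ} (hp : p ∈ JoinIrr X) :
    p.swap ∈ JoinIrr (transpose X) := by
  obtain ⟨hpV, ⟨q, hqV, hqp⟩, hirr⟩ := hp
  refine ⟨by simpa using hpV, ⟨q.swap, by simpa using hqV, Prod.swap_lt_swap.2 hqp⟩, ?_⟩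
  intro a ha b hb hap hbp hab
  refine hirr a.swap (mem_verts_transpose.1 ha) b.swap (mem_verts_transpose.1 hb)
    (by simpa using Prod.swap_lt_swap.2 hap) (by simpa using Prod.swap_lt_swap.2 hbp) ?_
  rw [← Prod.swap_sup, hab, Prod.swap_swap]

@[simp] lemma mem_joinIrr_transpose {p : ℤ × ℤ} :
    p ∈ JoinIrr (transpose X) ↔ p.swap ∈ JoinIrr X :=
  ⟨fun h => by simpa using mem_joinIrr_transpose_of_mem h, fun h => by
    simpa using mem_joinIrr_transpose_of_mem h⟩

lemma latticeSetup_transpose (h : LatticeSetup X m n) : LatticeSetup (transpose X) n m := by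
  obtain ⟨hlat, h0, hmn, hbd⟩ := h
  refine ⟨fun a ha b hb => ?_, by simpa using h0, by simpa using hmn, fun v hv => ?_⟩
  · have := hlat _ (mem_verts_transpose.1 ha) _ (mem_verts_transpose.1 hb)
    simpa [← Prod.swap_sup, ← Prod.swap_inf] using this
  · have := hbd _ (mem_verts_transpose.1 hv)
    simp only [Prod.le_def, Prod.fst_swap, Prod.snd_swap] at this ⊢
    omega

lemma omegaOK_transpose (h : OmegaOK X ω) : OmegaOK (transpose X) (ω ∘ Prod.swap) := by
  refine ⟨fun p hp q hq hpq => ?_, fun p hp q hq hpq => ?_⟩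
  · simpa using h.1 (mem_joinIrr_transpose.1 hp) (mem_joinIrr_transpose.1 hq) hpq
  · exact h.2 _ (mem_joinIrr_transpose.1 hp) _ (mem_joinIrr_transpose.1 hq)
      (Prod.swap_le_swap.2 hpq)

end Transpose

section EdgeLabels

variable {X : Finset (ℤ × ℤ)} {m n : ℕ} {ω : ℤ × ℤ → ℕ}

/-- The label of the covering `u ⋖ v` of `V(X)`: the `p_i` of a descent is the label of
`μ (i - 1) ⋖ μ i`. -/
def IsEdgeLabel (X : Finset (ℤ × ℤ)) (u v p : ℤ × ℤ) : Prop :=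
  p ∈ JoinIrr X ∧ p ≤ v ∧ ¬ p ≤ u

@[simp] lemma isEdgeLabel_transpose {u v p : ℤ × ℤ} :
    IsEdgeLabel (transpose X) u v p ↔ IsEdgeLabel X u.swap v.swap p.swap := by
  simp [IsEdgeLabel]

variable {u w p q : ℤ × ℤ}

lemma IsEdgeLabel.fst_eq_of_right (hp : IsEdgeLabel X u (u + (1, 0)) p) : p.1 = u.1 + 1 := by
  obtain ⟨-, hpv, hpu⟩ := hp
  simp only [Prod.le_def, Prod.fst_add, Prod.snd_add] at hpv hpu
  omega

lemma IsEdgeLabel.snd_eq_of_up (hp : IsEdgeLabel X u (u + (0, 1)) p) : p.2 = u.2 + 1 := by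
  obtain ⟨-, hpv, hpu⟩ := hp
  simp only [Prod.le_def, Prod.fst_add, Prod.snd_add] at hpv hpu
  omega

/-- Otherwise `p = (p ⊓ w) ⊔ (p ⊓ u)` would not be join-irreducible. -/
lemma IsEdgeLabel.le_of_right (hlat : LatticeSetup X m n) (hu : u ∈ Verts X)
    (hp : IsEdgeLabel X u (u + (1, 0)) p) (hw : w ∈ Verts X) (huw : u.1 < w.1) : p ≤ w := by
  have hp1 := hp.fst_eq_of_right
  obtain ⟨⟨hpV, -, hirr⟩, hpv, hpu⟩ := hp
  have hp2 : p.2 ≤ u.2 := by simpa using hpv.2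
  by_contra hpw
  refine hirr (p ⊓ w) (hlat.1 _ hpV _ hw).2 (p ⊓ u) (hlat.1 _ hpV _ hu).2
    (inf_lt_left.2 hpw) (inf_lt_left.2 hpu) ?_
  ext <;> simp only [Prod.fst_sup, Prod.fst_inf, Prod.snd_sup, Prod.snd_inf] <;> omega

lemma IsEdgeLabel.le_of_up (hlat : LatticeSetup X m n) (hu : u ∈ Verts X)
    (hp : IsEdgeLabel X u (u + (0, 1)) p) (hw : w ∈ Verts X) (huw : u.2 < w.2) : p ≤ w := by
  simpa using IsEdgeLabel.le_of_right (latticeSetup_transpose hlat) (u := u.swap) (p := p.swap)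
    (w := w.swap) (by simpa) (by simpa using hp) (by simpa) huw

lemma exists_isEdgeLabel_right (hlat : LatticeSetup X m n) (hu : u ∈ Verts X)
    (hv : u + (1, 0) ∈ Verts X) : ∃ p, IsEdgeLabel X u (u + (1, 0)) p := by
  set S := {w ∈ Verts X | u.1 < w.1}
  obtain ⟨p, hpS, hpmin⟩ := ((verts_finite X).subset fun w hw => hw.1).exists_minimal
    (s := S) ⟨_, hv, by simp⟩
  have hleast : ∀ w ∈ S, p ≤ w := fun w hw =>
    (hpmin ⟨(hlat.1 _ hpS.1 _ hw.1).2, lt_inf_iff.2 ⟨hpS.2, hw.2⟩⟩ inf_le_left).trans inf_le_right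
  have hpu : ¬ p ≤ u := fun h => h.1.not_gt hpS.2
  refine ⟨p, ⟨hpS.1, ⟨p ⊓ u, (hlat.1 _ hpS.1 _ hu).2, inf_lt_left.2 hpu⟩, ?_⟩,
    hleast _ ⟨hv, by simp⟩, hpu⟩
  intro a ha b hb hap hbp hab
  have : u.1 < a.1 ∨ u.1 < b.1 := by simpa [← hab] using hpS.2
  rcases this with h | h
  · exact hap.not_ge (hleast a ⟨ha, h⟩)
  · exact hbp.not_ge (hleast b ⟨hb, h⟩)

lemma exists_isEdgeLabel_up (hlat : LatticeSetup X m n) (hu : u ∈ Verts X)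
    (hv : u + (0, 1) ∈ Verts X) : ∃ p, IsEdgeLabel X u (u + (0, 1)) p := by
  obtain ⟨p, hp⟩ := exists_isEdgeLabel_right (latticeSetup_transpose hlat) (u := u.swap)
    (by simpa) (by simpa using hv)
  exact ⟨p.swap, by simpa using hp⟩

lemma IsEdgeLabel.le_of_right_right (hlat : LatticeSetup X m n) (hu : u ∈ Verts X)
    (hp : IsEdgeLabel X u (u + (1, 0)) p) (hq : IsEdgeLabel X w (w + (1, 0)) q)
    (huw : u.1 ≤ w.1) : p ≤ q :=
  hp.le_of_right hlat hu hq.1.1 (by rw [hq.fst_eq_of_right]; omega)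

lemma IsEdgeLabel.le_of_up_up (hlat : LatticeSetup X m n) (hu : u ∈ Verts X)
    (hp : IsEdgeLabel X u (u + (0, 1)) p) (hq : IsEdgeLabel X w (w + (0, 1)) q)
    (huw : u.2 ≤ w.2) : p ≤ q :=
  hp.le_of_up hlat hu hq.1.1 (by rw [hq.snd_eq_of_up]; omega)

/-- The descent puts `q` left of the column of `p`, so that `q ⊔ u = u + (0, 1)`. -/
lemma add_up_mem_verts_of_right_up (hlat : LatticeSetup X m n) (hω : OmegaOK X ω)
    (hu : u ∈ Verts X) (hp : IsEdgeLabel X u (u + (1, 0)) p)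
    (hq : IsEdgeLabel X (u + (1, 0)) (u + (1, 0) + (0, 1)) q) (hqp : ω q < ω p) :
    u + (0, 1) ∈ Verts X := by
  have hq2 := hq.snd_eq_of_up
  have hq1 : q.1 ≤ u.1 := by
    by_contra h
    exact hqp.not_ge (hω.2 _ hp.1 _ hq.1 (hp.le_of_right hlat hu hq.1.1 (by omega)))
  convert (hlat.1 _ hq.1.1 _ hu).1 using 1
  ext <;> simp only [Prod.fst_add, Prod.snd_add, Prod.fst_sup, Prod.snd_sup, add_zero] at hq2 ⊢ <;>
    omega

lemma add_right_mem_verts_of_up_right (hlat : LatticeSetup X m n) (hω : OmegaOK X ω)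
    (hu : u ∈ Verts X) (hp : IsEdgeLabel X u (u + (0, 1)) p)
    (hq : IsEdgeLabel X (u + (0, 1)) (u + (0, 1) + (1, 0)) q) (hqp : ω q < ω p) :
    u + (1, 0) ∈ Verts X := by
  simpa using add_up_mem_verts_of_right_up (latticeSetup_transpose hlat) (omegaOK_transpose hω)
    (u := u.swap) (p := p.swap) (q := q.swap) (by simpa) (by simpa using hp)
    (by simpa using hq) hqp

end EdgeLabels

section Chains

variable {X : Finset (ℤ × ℤ)} {m n : ℕ} {ω : ℤ × ℤ → ℕ} {μ : ℕ → ℤ × ℤ}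

lemma IsMaxChainPath.step (hμ : IsMaxChainPath X m n μ) {j : ℕ} (hj : j < m + n) :
    μ (j + 1) = μ j + (1, 0) ∨ μ (j + 1) = μ j + (0, 1) :=
  (hμ.2.1 j hj).imp sub_eq_iff_eq_add'.1 sub_eq_iff_eq_add'.1

lemma IsMaxChainPath.monotone (hμ : IsMaxChainPath X m n μ) : Monotone μ := by
  refine monotone_nat_of_le_succ fun j => ?_
  rcases lt_or_ge j (m + n) with hj | hj
  · rcases hμ.step hj with h | h <;> simp [h, Prod.le_def]
  · rw [hμ.2.2.1 j hj, hμ.2.2.1 (j + 1) (by omega)]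

lemma IsMaxChainPath.fst_add_snd (hμ : IsMaxChainPath X m n μ) {j : ℕ} (hj : j ≤ m + n) :
    (μ j).1 + (μ j).2 = j := by
  induction j with
  | zero => simp [hμ.1]
  | succ j ih =>
    have := ih (by omega)
    rcases hμ.step (j := j) (by omega) with h | h <;> simp only [h, Prod.fst_add, Prod.snd_add] <;>
      push_cast <;> omega

/-- `s + 1` is the step at which `μ` leaves the column `(μ j).1`. -/
lemma IsMaxChainPath.exists_up_right_of_up (hμ : IsMaxChainPath X m n μ) {j : ℕ}
    (hU : μ (j + 1) = μ j + (0, 1)) (hm : (μ j).1 < m) :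
    ∃ s, j ≤ s ∧ s + 1 < m + n ∧ (μ (s + 1)).1 = (μ j).1 ∧ μ (s + 1) = μ s + (0, 1) ∧
      μ (s + 2) = μ (s + 1) + (1, 0) := by
  have hex : ∃ k, (μ j).1 < (μ k).1 := ⟨m + n, by rw [hμ.2.2.1 _ le_rfl]; exact hm⟩
  have hk : j + 2 ≤ Nat.find hex := by
    by_contra h
    have h₁ := (hμ.monotone (show Nat.find hex ≤ j + 1 by omega)).1
    have h₂ := Nat.find_spec hex
    rw [hU] at h₁
    simp only [Prod.fst_add] at h₁
    omega
  obtain ⟨s, hs⟩ : ∃ s, Nat.find hex = s + 2 := ⟨Nat.find hex - 2, by omega⟩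
  have hs₁ : (μ (s + 1)).1 ≤ (μ j).1 := not_lt.1 (Nat.find_min hex (by omega))
  have hs₂ : (μ j).1 < (μ (s + 2)).1 := hs ▸ Nat.find_spec hex
  have hcol : (μ (s + 1)).1 = (μ j).1 := le_antisymm hs₁ (hμ.monotone (by omega)).1
  have hsn : s + 1 < m + n := by
    by_contra h
    rw [hμ.2.2.1 (s + 2) (by omega), ← hμ.2.2.1 (s + 1) (by omega)] at hs₂
    omega
  refine ⟨s, by omega, hsn, hcol, (hμ.step (by omega)).resolve_left fun h => ?_,
    (hμ.step hsn).resolve_right fun h => ?_⟩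
  · have := (hμ.monotone (show j ≤ s by omega)).1
    rw [h] at hcol
    simp only [Prod.fst_add] at hcol
    omega
  · rw [h] at hs₂
    simp only [Prod.fst_add] at hs₂
    omega

lemma isMaxChainPath_transpose (hμ : IsMaxChainPath X m n μ) :
    IsMaxChainPath (transpose X) n m (Prod.swap ∘ μ) := by
  refine ⟨by simp [hμ.1], fun j hj => ?_, fun j hj => ?_, fun j hj => ?_⟩
  · rcases hμ.2.1 j (by omega) with h | h <;> simp [← Prod.swap_sub, h]
  · simp [hμ.2.2.1 j (by omega)]
  · simpa using hμ.2.2.2 j (by omega)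

lemma descentAt_iff {i : ℕ} : DescentAt X ω μ i ↔
    ∃ p q, IsEdgeLabel X (μ (i - 1)) (μ i) p ∧ IsEdgeLabel X (μ i) (μ (i + 1)) q ∧ ω q < ω p :=
  ⟨fun ⟨p, hp, q, hq, hpi, hpi', hqi, hqi', hqp⟩ => ⟨p, q, ⟨hp, hpi, hpi'⟩, ⟨hq, hqi, hqi'⟩, hqp⟩,
    fun ⟨p, q, ⟨hp, hpi, hpi'⟩, ⟨hq, hqi, hqi'⟩, hqp⟩ => ⟨p, hp, q, hq, hpi, hpi', hqi, hqi', hqp⟩⟩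

lemma descentAt_transpose {i : ℕ} :
    DescentAt (transpose X) (ω ∘ Prod.swap) (Prod.swap ∘ μ) i ↔ DescentAt X ω μ i := by
  simp only [descentAt_iff, isEdgeLabel_transpose, Function.comp, Prod.swap_swap]
  constructor
  · rintro ⟨p, q, h⟩
    exact ⟨p.swap, q.swap, h⟩
  · rintro ⟨p, q, h⟩
    exact ⟨p.swap, q.swap, by simpa using h⟩

lemma des_transpose :
    Des (transpose X) n m (ω ∘ Prod.swap) (Prod.swap ∘ μ) = Des X m n ω μ := by
  ext i
  simp [Des, descentAt_transpose, add_comm n m]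

lemma psi_transpose :
    psi (transpose X) n m (ω ∘ Prod.swap) (Prod.swap ∘ μ) = Prod.swap '' psi X m n ω μ := by
  rw [psi, psi, des_transpose, Set.image_image]
  rfl

variable (hlat : LatticeSetup X m n) (hω : OmegaOK X ω) (hμ : IsMaxChainPath X m n μ)
include hlat hμ

lemma IsMaxChainPath.exists_isEdgeLabel {j : ℕ} (hj : j < m + n) :
    ∃ p, IsEdgeLabel X (μ j) (μ (j + 1)) p := by
  have hv := hμ.2.2.2 (j + 1) hj
  rcases hμ.step hj with h | h <;> rw [h] at hv ⊢
  · exact exists_isEdgeLabel_right hlat (hμ.2.2.2 j hj.le) hv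
  · exact exists_isEdgeLabel_up hlat (hμ.2.2.2 j hj.le) hv

lemma IsMaxChainPath.isEdgeLabel_unique {j : ℕ} (hj : j < m + n) {p q : ℤ × ℤ}
    (hp : IsEdgeLabel X (μ j) (μ (j + 1)) p) (hq : IsEdgeLabel X (μ j) (μ (j + 1)) q) : p = q := by
  have hu := hμ.2.2.2 j hj.le
  rcases hμ.step hj with h | h <;> rw [h] at hp hq
  · exact le_antisymm (hp.le_of_right_right hlat hu hq le_rfl)
      (hq.le_of_right_right hlat hu hp le_rfl)
  · exact le_antisymm (hp.le_of_up_up hlat hu hq le_rfl) (hq.le_of_up_up hlat hu hp le_rfl)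

lemma IsMaxChainPath.descentAt_succ_iff {j : ℕ} (hj : j + 1 < m + n) {p q : ℤ × ℤ}
    (hp : IsEdgeLabel X (μ j) (μ (j + 1)) p) (hq : IsEdgeLabel X (μ (j + 1)) (μ (j + 2)) q) :
    DescentAt X ω μ (j + 1) ↔ ω q < ω p := by
  refine ⟨fun hd => ?_, fun h => descentAt_iff.2 ⟨p, q, hp, hq, h⟩⟩
  obtain ⟨p', q', hp', hq', h⟩ := descentAt_iff.1 hd
  rwa [hμ.isEdgeLabel_unique hlat (by omega) hp hp', hμ.isEdgeLabel_unique hlat hj hq hq']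

include hω in
lemma IsMaxChainPath.right_up_or_up_right {j : ℕ} (hj : j + 1 < m + n)
    (hd : DescentAt X ω μ (j + 1)) :
    (μ (j + 1) = μ j + (1, 0) ∧ μ (j + 2) = μ (j + 1) + (0, 1)) ∨
      (μ (j + 1) = μ j + (0, 1) ∧ μ (j + 2) = μ (j + 1) + (1, 0)) := by
  obtain ⟨p, q, hp, hq, hqp⟩ : ∃ p q, IsEdgeLabel X (μ j) (μ (j + 1)) p ∧
      IsEdgeLabel X (μ (j + 1)) (μ (j + 2)) q ∧ ω q < ω p := descentAt_iff.1 hd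
  have hu := hμ.2.2.2 j (by omega)
  have huv : μ j ≤ μ (j + 1) := hμ.monotone (by omega)
  rcases hμ.step (j := j) (by omega) with h₁ | h₁ <;>
    rcases hμ.step (j := j + 1) hj with h₂ | h₂
  · rw [h₁] at hp
    rw [h₂] at hq
    exact absurd (hω.2 _ hp.1 _ hq.1 (hp.le_of_right_right hlat hu hq huv.1)) hqp.not_ge
  · exact Or.inl ⟨h₁, h₂⟩
  · exact Or.inr ⟨h₁, h₂⟩
  · rw [h₁] at hp
    rw [h₂] at hq
    exact absurd (hω.2 _ hp.1 _ hq.1 (hp.le_of_up_up hlat hu hq huv.2)) hqp.not_ge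

end Chains

section FourCorners

variable {X : Finset (ℤ × ℤ)}

lemma exists_sign_of_ordConnected {S : Set ℤ} (hS : S.OrdConnected) {b : ℤ} (hb : b ∉ S) :
    ∃ δ : ℤ, (δ = 1 ∨ δ = -1) ∧ ∀ y ∈ S, δ * (y - b) < 0 := by
  by_cases h : ∃ y ∈ S, b < y
  · obtain ⟨y₀, hy₀, hby₀⟩ := h
    refine ⟨-1, Or.inr rfl, fun y hy => ?_⟩
    by_contra hyb
    exact hb (hS.out hy hy₀ ⟨by omega, hby₀.le⟩)
  · simp only [not_exists, not_and, not_lt] at h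
    refine ⟨1, Or.inl rfl, fun y hy => ?_⟩
    have hyb : y ≠ b := fun e => hb (e ▸ hy)
    have := h y hy
    omega

lemma IsConvexPoly.ordConnected_col (hX : IsConvexPoly X) (a : ℤ) :
    {y | (a, y) ∈ X}.OrdConnected :=
  ⟨fun y₁ h₁ y₂ h₂ _ hy => hX.2 y₁ y₂ _ a h₁ h₂ hy.1 hy.2⟩

lemma IsConvexPoly.ordConnected_row (hX : IsConvexPoly X) (b : ℤ) :
    {x | (x, b) ∈ X}.OrdConnected :=
  ⟨fun x₁ h₁ x₂ h₂ _ hx => hX.1 x₁ x₂ _ b h₁ h₂ hx.1 hx.2⟩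

lemma IsPolyomino.mem_of_adj_closed (hX : IsPolyomino X) {S : Set (ℤ × ℤ)}
    (hS : ∀ c ∈ X, ∀ d ∈ X, Adj c d → c ∈ S → d ∈ S) {c d : ℤ × ℤ} (hc : c ∈ X) (hcS : c ∈ S)
    (hd : d ∈ X) : d ∈ S := by
  have hcd := hX.2 c hc d hd
  clear hd
  induction hcd with
  | refl => exact hcS
  | tail _ hstep ih => exact hS _ hstep.1 _ hstep.2.1 hstep.2.2 ih

/-- The signs `ε, δ = ±1` select a quadrant at the cell `(a, b)`. If the two arms of the cross
through `(a, b)` bounding it contain no cell, a cell in the closed quadrant traps `X` in the open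
quadrant. -/
lemma IsPolyomino.mem_quadrant (hX : IsPolyomino X) {a b ε δ : ℤ} (hε : ε = 1 ∨ ε = -1)
    (hδ : δ = 1 ∨ δ = -1) (hcol : ∀ y, (a, y) ∈ X → δ * (y - b) < 0)
    (hrow : ∀ x, (x, b) ∈ X → ε * (x - a) < 0) {c d : ℤ × ℤ} (hc : c ∈ X)
    (hc₁ : 0 ≤ ε * (c.1 - a)) (hc₂ : 0 ≤ δ * (c.2 - b)) (hd : d ∈ X) :
    0 < ε * (d.1 - a) ∧ 0 < δ * (d.2 - b) := by
  have hopen : ∀ e ∈ X, 0 ≤ ε * (e.1 - a) → 0 ≤ δ * (e.2 - b) →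
      0 < ε * (e.1 - a) ∧ 0 < δ * (e.2 - b) := by
    intro e he hx hy
    obtain ⟨x, y⟩ := e
    dsimp only at hx hy ⊢
    have hxa : x ≠ a := by
      rintro rfl
      have := hcol y he
      omega
    have hyb : y ≠ b := by
      rintro rfl
      have := hrow x he
      omega
    rcases hε with rfl | rfl <;> rcases hδ with rfl | rfl <;> omega
  refine hX.mem_of_adj_closed (S := {e | 0 < ε * (e.1 - a) ∧ 0 < δ * (e.2 - b)}) ?_ hc
    (hopen c hc hc₁ hc₂) hd
  rintro e - f hf hef ⟨he₁, he₂⟩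
  refine hopen f hf ?_ ?_ <;> unfold Adj at hef <;>
    rcases hε with rfl | rfl <;> rcases hδ with rfl | rfl <;> omega

/-- Convexity empties a vertical and a horizontal arm of the cross through the missing cell; the
corner between them then traps `X` in their quadrant, away from the opposite corner. -/
lemma IsPolyomino.mem_of_corners_mem (hX : IsPolyomino X) (hconv : IsConvexPoly X) {u : ℤ × ℤ}
    (h₀₀ : u ∈ Verts X) (h₁₀ : u + (1, 0) ∈ Verts X) (h₀₁ : u + (0, 1) ∈ Verts X)
    (h₁₁ : u + (1, 1) ∈ Verts X) : u + (1, 1) ∈ X := by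
  by_contra hs
  have hs' : (u.1 + 1, u.2 + 1) ∉ X := hs
  obtain ⟨δ, hδ, hcol⟩ := exists_sign_of_ordConnected (hconv.ordConnected_col (u.1 + 1)) hs'
  obtain ⟨ε, hε, hrow⟩ := exists_sign_of_ordConnected (hconv.ordConnected_row (u.2 + 1)) hs'
  obtain ⟨c₀₀, hc₀₀, hc₀₀'⟩ := mem_verts_iff.1 h₀₀
  obtain ⟨c₁₀, hc₁₀, hc₁₀'⟩ := mem_verts_iff.1 h₁₀
  obtain ⟨c₀₁, hc₀₁, hc₀₁'⟩ := mem_verts_iff.1 h₀₁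
  obtain ⟨c₁₁, hc₁₁, hc₁₁'⟩ := mem_verts_iff.1 h₁₁
  have trap := fun {c d} => hX.mem_quadrant hε hδ hcol hrow (c := c) (d := d)
  simp only [Prod.le_def, Prod.fst_add, Prod.snd_add] at hc₀₀' hc₁₀' hc₀₁' hc₁₁'
  rcases hε with rfl | rfl <;> rcases hδ with rfl | rfl
  · have := trap hc₁₁ (by omega) (by omega) hc₀₀
    omega
  · have := trap hc₁₀ (by omega) (by omega) hc₀₁
    omega
  · have := trap hc₀₁ (by omega) (by omega) hc₁₀
    omega
  · have := trap hc₀₀ (by omega) (by omega) hc₁₁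
    omega

end FourCorners

section Rooks

variable {X : Finset (ℤ × ℤ)} {m n : ℕ} {ω : ℤ × ℤ → ℕ} {μ : ℕ → ℤ × ℤ}

lemma psi_finite (X : Finset (ℤ × ℤ)) (m n : ℕ) (ω : ℤ × ℤ → ℕ) (μ : ℕ → ℤ × ℤ) :
    (psi X m n ω μ).Finite :=
  ((Set.finite_Ico 1 (m + n)).subset fun _ hi => ⟨hi.1, hi.2.1⟩).image _

lemma IsMaxChainPath.mem_of_mem_des (hpoly : IsPolyomino X) (hconv : IsConvexPoly X)
    (hlat : LatticeSetup X m n) (hω : OmegaOK X ω) (hμ : IsMaxChainPath X m n μ) {i : ℕ}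
    (hi : i ∈ Des X m n ω μ) : μ (i + 1) ∈ X := by
  obtain ⟨hi₁, hin, hd⟩ := hi
  obtain ⟨j, rfl⟩ := Nat.exists_eq_add_of_le' hi₁
  obtain ⟨p, q, hp, hq, hqp⟩ : ∃ p q, IsEdgeLabel X (μ j) (μ (j + 1)) p ∧
      IsEdgeLabel X (μ (j + 1)) (μ (j + 2)) q ∧ ω q < ω p := descentAt_iff.1 hd
  have hu := hμ.2.2.2 j (by omega)
  have h₁ := hμ.2.2.2 (j + 1) (by omega)
  have h₂ := hμ.2.2.2 (j + 2) (by omega)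
  have hdiag : μ j + (1, 0) + (0, 1) = μ j + (1, 1) ∧ μ j + (0, 1) + (1, 0) = μ j + (1, 1) := by
    constructor <;> ext <;> simp
  show μ (j + 2) ∈ X
  rcases hμ.right_up_or_up_right hlat hω hin hd with ⟨hR, hU⟩ | ⟨hU, hR⟩
  · rw [hR] at hU hp hq h₁
    rw [hU] at hq h₂ ⊢
    rw [hdiag.1] at h₂ ⊢
    exact hpoly.mem_of_corners_mem hconv hu h₁
      (add_up_mem_verts_of_right_up hlat hω hu hp hq hqp) h₂
  · rw [hU] at hR hp hq h₁
    rw [hR] at hq h₂ ⊢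
    rw [hdiag.2] at h₂ ⊢
    exact hpoly.mem_of_corners_mem hconv hu
      (add_right_mem_verts_of_up_right hlat hω hu hp hq hqp) h₁ h₂

variable (hlat : LatticeSetup X m n) (hω : OmegaOK X ω) (hμ : IsMaxChainPath X m n μ)
include hlat hω hμ

/-- Between two descent cells in one column the chain only goes up, so the two descents are at
consecutive corners up-right-up, and the labels of the two up steps would decrease. -/
lemma IsMaxChainPath.fst_lt_fst_of_mem_des {i j : ℕ} (hi : i ∈ Des X m n ω μ)
    (hj : j ∈ Des X m n ω μ) (hij : i < j) : (μ (i + 1)).1 < (μ (j + 1)).1 := by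
  obtain ⟨hi₁, hin, hdi⟩ := hi
  obtain ⟨hj₁, hjn, hdj⟩ := hj
  obtain ⟨i, rfl⟩ := Nat.exists_eq_add_of_le' hi₁
  obtain ⟨j, rfl⟩ := Nat.exists_eq_add_of_le' hj₁
  show (μ (i + 2)).1 < (μ (j + 2)).1
  by_contra hle
  have hcol : ∀ k, i + 2 ≤ k → k ≤ j + 2 → (μ k).1 = (μ (i + 2)).1 := fun k hk₁ hk₂ =>
    le_antisymm (by have := (hμ.monotone hk₂).1; omega) (hμ.monotone hk₁).1
  have hnotR : ∀ k, i + 2 ≤ k → k < j + 2 → μ (k + 1) ≠ μ k + (1, 0) := fun k hk₁ hk₂ h => by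
    have h₁ := hcol k hk₁ hk₂.le
    have h₂ := hcol (k + 1) (by omega) hk₂
    rw [h] at h₂
    simp only [Prod.fst_add] at h₂
    omega
  rcases hμ.right_up_or_up_right hlat hω hjn hdj with ⟨hRj, -⟩ | ⟨-, hRj⟩
  · obtain rfl : j = i + 1 := by
      by_contra hji
      exact hnotR j (by omega) (by omega) hRj
    rcases hμ.right_up_or_up_right hlat hω hin hdi with ⟨-, hU⟩ | ⟨hU₀, -⟩
    · rw [hRj] at hU
      simp [Prod.ext_iff] at hU
    have hU₂ : μ (i + 3) = μ (i + 2) + (0, 1) :=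
      (hμ.step (by omega)).resolve_left (hnotR (i + 2) le_rfl (by omega))
    obtain ⟨p₀, hp₀⟩ := hμ.exists_isEdgeLabel hlat (j := i) (by omega)
    obtain ⟨p₁, hp₁⟩ := hμ.exists_isEdgeLabel hlat (j := i + 1) (by omega)
    obtain ⟨p₂, hp₂⟩ := hμ.exists_isEdgeLabel hlat (j := i + 2) (by omega)
    have h₀₁ := (hμ.descentAt_succ_iff hlat hin hp₀ hp₁).1 hdi
    have h₁₂ := (hμ.descentAt_succ_iff hlat hjn hp₁ hp₂).1 hdj
    rw [hU₀] at hp₀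
    rw [hU₂] at hp₂
    have := hω.2 _ hp₀.1 _ hp₂.1
      (hp₀.le_of_up_up hlat (hμ.2.2.2 i (by omega)) hp₂ (hμ.monotone (by omega)).2)
    omega
  · exact hnotR (j + 1) (by omega) (by omega) hRj

lemma IsMaxChainPath.snd_lt_snd_of_mem_des {i j : ℕ} (hi : i ∈ Des X m n ω μ)
    (hj : j ∈ Des X m n ω μ) (hij : i < j) : (μ (i + 1)).2 < (μ (j + 1)).2 :=
  (isMaxChainPath_transpose hμ).fst_lt_fst_of_mem_des (latticeSetup_transpose hlat)
    (omegaOK_transpose hω) (by rwa [des_transpose]) (by rwa [des_transpose]) hij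

lemma IsMaxChainPath.isRookConfig_psi (hpoly : IsPolyomino X) (hconv : IsConvexPoly X) :
    IsRookConfig X (Des X m n ω μ).ncard (psi_finite X m n ω μ).toFinset := by
  have hinj : Set.InjOn (fun i => μ (i + 1)) (Des X m n ω μ) := fun i hi j hj hij => by
    have hi' := hμ.fst_add_snd (j := i + 1) hi.2.1
    have hj' := hμ.fst_add_snd (j := j + 1) hj.2.1
    simp only at hij
    rw [hij] at hi'
    omega
  refine ⟨fun c hc => ?_, ?_, ?_⟩
  · obtain ⟨i, hi, rfl⟩ := (psi_finite X m n ω μ).mem_toFinset.1 hc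
    exact hμ.mem_of_mem_des hpoly hconv hlat hω hi
  · rw [← Set.ncard_eq_toFinset_card _ (psi_finite X m n ω μ), psi, hinj.ncard_image]
  · simp only [Set.Finite.mem_toFinset, psi, Set.mem_image]
    rintro _ ⟨i, hi, rfl⟩ _ ⟨j, hj, rfl⟩ hne
    rcases lt_trichotomy i j with h | rfl | h
    · exact ⟨(hμ.fst_lt_fst_of_mem_des hlat hω hi hj h).ne,
        (hμ.snd_lt_snd_of_mem_des hlat hω hi hj h).ne⟩
    · exact absurd rfl hne
    · exact ⟨(hμ.fst_lt_fst_of_mem_des hlat hω hj hi h).ne',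
        (hμ.snd_lt_snd_of_mem_des hlat hω hj hi h).ne'⟩

end Rooks

section Injectivity

variable {X : Finset (ℤ × ℤ)} {m n : ℕ} {ω : ℤ × ℤ → ℕ} {μ ν : ℕ → ℤ × ℤ}
variable (hlat : LatticeSetup X m n) (hω : OmegaOK X ω)
include hlat hω

lemma IsMaxChainPath.eq_succ_of_mem_des (hμ : IsMaxChainPath X m n μ) {j s : ℕ}
    (hs : s ∈ Des X m n ω μ)
    (hcol : (μ (s + 1)).1 = (μ (j + 1)).1) (hrow : (μ (j + 1)).2 < (μ (s + 1)).2) :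
    s = j + 1 := by
  obtain ⟨hs₁, hsn, hd⟩ := hs
  obtain ⟨s, rfl⟩ := Nat.exists_eq_add_of_le' hs₁
  rw [show s + 1 + 1 = s + 2 from rfl] at hcol hrow
  have hjs : j ≤ s := by
    by_contra h
    have := (hμ.monotone (show s + 2 ≤ j + 1 by omega)).2
    omega
  rcases hμ.right_up_or_up_right hlat hω hsn hd with ⟨hRs, -⟩ | ⟨-, hRs⟩
  · by_contra hne
    have h₂ := (hμ.monotone (show j + 1 ≤ s by omega)).1
    have h₃ := (hμ.monotone (show s + 1 ≤ s + 2 by omega)).1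
    rw [hRs] at h₃
    simp only [Prod.fst_add] at h₃
    omega
  · have h₁ := (hμ.monotone (show j + 1 ≤ s + 1 by omega)).1
    rw [hRs] at hcol
    simp only [Prod.fst_add] at hcol
    omega

lemma IsMaxChainPath.exists_mem_des_of_up (hν : IsMaxChainPath X m n ν) {j : ℕ} {p q : ℤ × ℤ}
    (hU : ν (j + 1) = ν j + (0, 1)) (hp : IsEdgeLabel X (ν j) (ν j + (1, 0)) p)
    (hq : IsEdgeLabel X (ν j) (ν (j + 1)) q) (hpq : ω p < ω q) :
    ∃ t ∈ Des X m n ω ν, (ν (t + 1)).1 = (ν j).1 + 1 ∧ (ν j).2 < (ν (t + 1)).2 := by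
  have hpm := (hlat.2.2.2 _ hp.1.1).2.1
  have hp₁ := hp.fst_eq_of_right
  obtain ⟨s, hjs, hsn, hcol, hUs, hR⟩ := hν.exists_up_right_of_up hU (by dsimp only at hpm; omega)
  obtain ⟨q', hq'⟩ := hν.exists_isEdgeLabel hlat (j := s) (by omega)
  obtain ⟨p', hp'⟩ := hν.exists_isEdgeLabel hlat (j := s + 1) hsn
  have hdes : DescentAt X ω ν (s + 1) := by
    refine (hν.descentAt_succ_iff hlat hsn hq' hp').2 ?_
    rw [hUs] at hq'
    rw [hR] at hp'
    have hpp' : p' ≤ p := hp'.le_of_right_right hlat (hν.2.2.2 _ (by omega)) hp (by omega)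
    have hqq' : q ≤ q' := by
      rw [hU] at hq
      exact hq.le_of_up_up hlat (hν.2.2.2 _ (by omega)) hq' (hν.monotone hjs).2
    exact (hω.2 _ hp'.1 _ hp.1 hpp').trans_lt (hpq.trans_le (hω.2 _ hq.1 _ hq'.1 hqq'))
  refine ⟨s + 1, ⟨by omega, hsn, hdes⟩, ?_, ?_⟩
  · show (ν (s + 2)).1 = (ν j).1 + 1
    rw [hR]
    simp only [Prod.fst_add]
    omega
  · show (ν j).2 < (ν (s + 2)).2
    have h₁ := (hν.monotone (show j + 1 ≤ s + 1 by omega)).2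
    rw [hU] at h₁
    rw [hR]
    simp only [Prod.snd_add] at h₁ ⊢
    omega

/-- The descent cell of `ν` entering the new column of `μ` would, as a descent cell of `μ`, be the
corner `μ (j + 2)` (`eq_succ_of_mem_des`), whose descent needs `ω q < ω p`. -/
lemma psi_ne_of_right_up_of_lt (hμ : IsMaxChainPath X m n μ) (hν : IsMaxChainPath X m n ν)
    {j : ℕ} (hj : μ j = ν j) (hR : μ (j + 1) = μ j + (1, 0)) (hU : ν (j + 1) = ν j + (0, 1))
    {p q : ℤ × ℤ} (hp : IsEdgeLabel X (μ j) (μ (j + 1)) p)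
    (hq : IsEdgeLabel X (ν j) (ν (j + 1)) q) (hpq : ω p < ω q) :
    psi X m n ω μ ≠ psi X m n ω ν := by
  have hp' : IsEdgeLabel X (ν j) (ν j + (1, 0)) p := by rwa [hR, hj] at hp
  obtain ⟨t, ht, htc, htr⟩ := hν.exists_mem_des_of_up hlat hω hU hp' hq hpq
  intro hψ
  obtain ⟨s, hs, hst⟩ : ν (t + 1) ∈ psi X m n ω μ := hψ ▸ ⟨t, ht, rfl⟩
  simp only at hst
  have hμj : (μ (j + 1)).1 = (ν j).1 + 1 ∧ (μ (j + 1)).2 = (ν j).2 := by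
    rw [hR, hj]
    simp
  obtain rfl := hμ.eq_succ_of_mem_des hlat hω (j := j) hs (by rw [hst, htc, hμj.1])
    (by rw [hst, hμj.2]; exact htr)
  obtain ⟨-, hjn, hd⟩ := hs
  obtain ⟨q', hq'⟩ := hμ.exists_isEdgeLabel hlat (j := j + 1) hjn
  have hqp := (hμ.descentAt_succ_iff hlat hjn hp hq').1 hd
  rcases hμ.right_up_or_up_right hlat hω hjn hd with ⟨-, hU'⟩ | ⟨hU', -⟩
  · rw [hU'] at hq'
    rw [hU] at hq
    have hqq' : q ≤ q' := hq.le_of_up_up hlat (hν.2.2.2 _ (by omega)) hq' (by omega)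
    exact absurd (hω.2 _ hq.1 _ hq'.1 hqq') (by omega)
  · rw [hR] at hU'
    simp [Prod.ext_iff] at hU'

lemma psi_ne_of_right_up (hμ : IsMaxChainPath X m n μ) (hν : IsMaxChainPath X m n ν) {j : ℕ}
    (hjn : j < m + n) (hj : μ j = ν j) (hR : μ (j + 1) = μ j + (1, 0))
    (hU : ν (j + 1) = ν j + (0, 1)) : psi X m n ω μ ≠ psi X m n ω ν := by
  obtain ⟨p, hp⟩ := hμ.exists_isEdgeLabel hlat hjn
  obtain ⟨q, hq⟩ := hν.exists_isEdgeLabel hlat hjn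
  have hpq : ω p ≠ ω q := by
    intro h
    obtain rfl := hω.1 hp.1 hq.1 h
    have h₁ := (hR ▸ hp).fst_eq_of_right
    have h₂ := hq.2.1.1
    rw [hU, ← hj] at h₂
    simp only [Prod.fst_add] at h₂
    omega
  rcases lt_or_gt_of_ne hpq with h | h
  · exact psi_ne_of_right_up_of_lt hlat hω hμ hν hj hR hU hp hq h
  · have := psi_ne_of_right_up_of_lt (latticeSetup_transpose hlat) (omegaOK_transpose hω)
      (isMaxChainPath_transpose hν) (isMaxChainPath_transpose hμ) (j := j)
      (by simp [hj]) (by simp [hU]) (by simp [hR]) (p := q.swap) (q := p.swap)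
      (by simpa using hq) (by simpa using hp) (by simpa using h)
    rw [psi_transpose, psi_transpose] at this
    exact fun hψ => this (by rw [hψ])

lemma psi_injOn : Set.InjOn (psi X m n ω) {μ | IsMaxChainPath X m n μ} := by
  intro μ (hμ : IsMaxChainPath X m n μ) ν (hν : IsMaxChainPath X m n ν) hψ
  by_contra hne
  have hex : ∃ k, μ k ≠ ν k := Function.ne_iff.1 hne
  have hfind : Nat.find hex ≠ 0 := fun h => Nat.find_spec hex (by rw [h, hμ.1, hν.1])
  obtain ⟨j, hj⟩ : ∃ j, Nat.find hex = j + 1 := Nat.exists_eq_succ_of_ne_zero hfind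
  have hjeq : μ j = ν j := not_not.1 (Nat.find_min hex (by omega))
  have hjne : μ (j + 1) ≠ ν (j + 1) := hj ▸ Nat.find_spec hex
  have hjn : j < m + n := by
    by_contra h
    exact hjne (by rw [hμ.2.2.1 _ (by omega), hν.2.2.1 _ (by omega)])
  rcases hμ.step hjn with hμR | hμU <;> rcases hν.step hjn with hνR | hνU
  · exact hjne (by rw [hμR, hνR, hjeq])
  · exact psi_ne_of_right_up hlat hω hμ hν hjn hjeq hμR hνU hψ
  · exact psi_ne_of_right_up hlat hω hν hμ hjn hjeq.symm hνR hμU hψ.symm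
  · exact hjne (by rw [hμU, hνU, hjeq])

end Injectivity

theorem numChains_le_rook (X : Finset (ℤ × ℤ)) (m n : ℕ)
    (hpoly : IsPolyomino X) (hconv : IsConvexPoly X)
    (hlat : LatticeSetup X m n)
    (ω : ℤ × ℤ → ℕ) (hω : OmegaOK X ω) :
    ∀ k : ℕ, numChains X m n ω k ≤ rook X k := by
  intro k
  have hfin : {S : Finset (ℤ × ℤ) | IsRookConfig X k S}.Finite :=
    X.powerset.finite_toSet.subset fun S hS => Finset.mem_powerset.2 (Finset.coe_subset.1 hS.1)
  refine Set.ncard_le_ncard_of_injOn (fun μ => (psi_finite X m n ω μ).toFinset) ?_ ?_ hfin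
  · rintro μ ⟨hμ, rfl⟩
    exact hμ.isRookConfig_psi hlat hω hpoly hconv
  · rintro μ ⟨hμ, -⟩ ν ⟨hν, -⟩ h
    exact psi_injOn hlat hω hμ hν (Set.Finite.toFinset_inj.1 h)
end

section
/- Let X be a convex polyomino such that V(X) ⊆ ℕ² is a sublattice of ℕ² with minimum (0,0) and maximum (m,n), and fix an injective order-preserving map ω from JI(X) to ℕ. Suppose w ∈ ℤ² is such that the four cells C(w), C(w+(1,0)), C(w+(0,1)), C(w+(1,1)) all belong to X. Then the 2-rook configuration {C(w+(1,0)), C(w+(0,1))}, consisting of the bottom-right and top-left cells of this 2×2 block, is not equal to ψ(μ) for any maximal chain μ of V(X); in particular ψ is not surjective onto the set of 2-rook configurations in X. -/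
theorem psi_misses_antidiagonal_rooks (X : Finset (ℤ × ℤ)) (m n : ℕ)
    (hpoly : IsPolyomino X) (hconv : IsConvexPoly X)
    (hlat : LatticeSetup X m n)
    (ω : ℤ × ℤ → ℕ) (hω : OmegaOK X ω)
    (w : ℤ × ℤ) (hw : w ∈ X ∧ w + ((1, 0) : ℤ × ℤ) ∈ X ∧
      w + ((0, 1) : ℤ × ℤ) ∈ X ∧ w + ((1, 1) : ℤ × ℤ) ∈ X) :
    (∀ μ : ℕ → ℤ × ℤ, IsMaxChainPath X m n μ →
        psi X m n ω μ ≠ ({w + ((1, 0) : ℤ × ℤ), w + ((0, 1) : ℤ × ℤ)} : Set (ℤ × ℤ))) ∧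
      ¬ ∀ S : Set (ℤ × ℤ), S ⊆ (↑X : Set (ℤ × ℤ)) → S.ncard = 2 →
          (∀ c ∈ S, ∀ d ∈ S, c ≠ d → c.1 ≠ d.1 ∧ c.2 ≠ d.2) →
          ∃ μ : ℕ → ℤ × ℤ, IsMaxChainPath X m n μ ∧ psi X m n ω μ = S := by
  obtain ⟨hw0, hw10, hw01, hw11⟩ := hw
  have hne : w + ((1, 0) : ℤ × ℤ) ≠ w + ((0, 1) : ℤ × ℤ) := by
    intro h
    have := congrArg Prod.fst h
    simp at this
  have main : ∀ μ : ℕ → ℤ × ℤ, IsMaxChainPath X m n μ →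
      psi X m n ω μ ≠ ({w + ((1, 0) : ℤ × ℤ), w + ((0, 1) : ℤ × ℤ)} : Set (ℤ × ℤ)) := by
    intro μ hμ hpsi
    obtain ⟨h0, hstep, htop, hverts⟩ := hμ
    have mono : Monotone μ := by
      apply monotone_nat_of_le_succ
      intro i
      by_cases hi : i < m + n
      · rcases hstep i hi with h | h <;>
        · have ha := congrArg Prod.fst h
          have hb := congrArg Prod.snd h
          simp [Prod.fst_sub, Prod.snd_sub] at ha hb
          rw [Prod.le_def]
          omega
      · rw [htop i (le_of_not_gt hi), htop (i + 1) (by omega)]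
    have hmem1 : w + ((1, 0) : ℤ × ℤ) ∈ psi X m n ω μ := by
      rw [hpsi]; exact Set.mem_insert _ _
    have hmem2 : w + ((0, 1) : ℤ × ℤ) ∈ psi X m n ω μ := by
      rw [hpsi]; exact Set.mem_insert_iff.mpr (Or.inr rfl)
    obtain ⟨i, _, hi2⟩ := hmem1
    obtain ⟨j, _, hj2⟩ := hmem2
    simp only at hi2 hj2
    rcases le_total i j with hij | hij
    · have := mono (Nat.add_le_add_right hij 1)
      rw [hi2, hj2, Prod.le_def] at this
      simp [Prod.fst_add, Prod.snd_add] at this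
    · have := mono (Nat.add_le_add_right hij 1)
      rw [hi2, hj2, Prod.le_def] at this
      simp [Prod.fst_add, Prod.snd_add] at this
  refine ⟨main, ?_⟩
  intro hall
  obtain ⟨μ, hμ, hpsi⟩ := hall ({w + ((1, 0) : ℤ × ℤ), w + ((0, 1) : ℤ × ℤ)} : Set (ℤ × ℤ))
    (by
      intro x hx
      rcases hx with rfl | hx
      · exact hw10
      · rw [Set.mem_singleton_iff] at hx
        subst hx
        exact hw01)
    (Set.ncard_pair hne)
    (by
      intro c hc d hd hcd
      rcases hc with rfl | hc <;> [skip; rw [Set.mem_singleton_iff] at hc] <;>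
      rcases hd with rfl | hd <;>
        first
        | exact absurd rfl hcd
        | (try rw [Set.mem_singleton_iff] at hd) <;>
          (try subst hc) <;> (try subst hd) <;>
          first
          | exact absurd rfl hcd
          | constructor <;> simp [Prod.fst_add, Prod.snd_add])
  exact main μ hμ hpsi
end

section
/- Let X be a convex polyomino such that V(X) ⊆ ℕ² is a sublattice of ℕ² with minimum (0,0) and maximum (m,n). Then the lattice V(X) has exactly m+n join-irreducible elements, i.e., |JI(X)| = m+n. -/
section Aux

/-- Arithmetic characterization of vertex membership. -/
lemma mem_verts_iff_s15 {X : Finset (ℤ × ℤ)} {v : ℤ × ℤ} :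
    v ∈ Verts X ↔ ∃ c ∈ X, (v.1 = c.1 ∨ v.1 = c.1 - 1) ∧ (v.2 = c.2 ∨ v.2 = c.2 - 1) := by
  constructor
  · rintro ⟨c, hc, h | h | h | h⟩ <;> refine ⟨c, hc, ?_⟩ <;> rw [h] <;>
      constructor <;> simp
  · rintro ⟨c, hc, h1, h2⟩
    refine ⟨c, hc, ?_⟩
    rcases h1 with h1 | h1 <;> rcases h2 with h2 | h2
    · exact Or.inl (Prod.ext_iff.mpr ⟨h1, h2⟩)
    · exact Or.inr (Or.inr (Or.inl (Prod.ext_iff.mpr (by simp [h1, h2]))))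
    · exact Or.inr (Or.inl (Prod.ext_iff.mpr (by simp [h1, h2])))
    · exact Or.inr (Or.inr (Or.inr (Prod.ext_iff.mpr (by simp [h1, h2]))))

/-- Intermediate value along a connecting path, for a projection changing by at
most one along adjacencies. -/
lemma rtg_proj {X : Finset (ℤ × ℤ)} (π : ℤ × ℤ → ℤ)
    (hπ : ∀ a b : ℤ × ℤ, Adj a b → π b = π a ∨ π b = π a + 1 ∨ π a = π b + 1)
    {c d : ℤ × ℤ}
    (h : Relation.ReflTransGen (fun a b => a ∈ X ∧ b ∈ X ∧ Adj a b) c d)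
    (hc : c ∈ X) :
    ∀ x : ℤ, π c ≤ x → x ≤ π d → ∃ e ∈ X, π e = x := by
  induction h with
  | refl => exact fun x h1 h2 => ⟨c, hc, le_antisymm h1 h2⟩
  | @tail b d hcb hbd ih =>
    intro x h1 h2
    obtain ⟨hbX, hdX, hadj⟩ := hbd
    rcases le_or_gt x (π b) with h | h
    · exact ih x h1 h
    · have := hπ _ _ hadj
      exact ⟨d, hdX, by omega⟩

end Aux

theorem joinIrr_ncard (X : Finset (ℤ × ℤ)) (m n : ℕ)
    (hpoly : IsPolyomino X) (hconv : IsConvexPoly X)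
    (hlat : LatticeSetup X m n) :
    (JoinIrr X).ncard = m + n := by
  clear hconv
  obtain ⟨hXne, hXconn⟩ := hpoly
  obtain ⟨hsl, h0, hmn, hbox⟩ := hlat
  -- vertices lie in the box
  have hvbox : ∀ v ∈ Verts X, 0 ≤ v.1 ∧ 0 ≤ v.2 ∧ v.1 ≤ (m : ℤ) ∧ v.2 ≤ (n : ℤ) := by
    intro v hv
    obtain ⟨h1, h2⟩ := hbox v hv
    rw [Prod.le_def] at h1 h2
    exact ⟨h1.1, h1.2, h2.1, h2.2⟩
  -- cells lie in the box
  have hcorn : ∀ c ∈ X, ∀ v : ℤ × ℤ,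
      (v.1 = c.1 ∨ v.1 = c.1 - 1) → (v.2 = c.2 ∨ v.2 = c.2 - 1) → v ∈ Verts X := by
    intro c hc v h1 h2
    exact mem_verts_iff_s15.mpr ⟨c, hc, h1, h2⟩
  have hcellbox : ∀ c ∈ X, 1 ≤ c.1 ∧ c.1 ≤ (m : ℤ) ∧ 1 ≤ c.2 ∧ c.2 ≤ (n : ℤ) := by
    intro c hc
    have b1 := hvbox c (hcorn c hc c (Or.inl rfl) (Or.inl rfl))
    have b2 := hvbox (c.1 - 1, c.2 - 1) (hcorn c hc _ (Or.inr rfl) (Or.inr rfl))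
    simp only [Prod.fst, Prod.snd] at b1 b2
    omega
  -- the cells (1,1) and (m,n) belong to X
  have hc11 : ((1, 1) : ℤ × ℤ) ∈ X := by
    obtain ⟨c, hc, h1, h2⟩ := mem_verts_iff_s15.mp h0
    have hb := hcellbox c hc
    have : c = ((1, 1) : ℤ × ℤ) := Prod.ext_iff.mpr (by simp at h1 h2 ⊢; omega)
    rwa [this] at hc
  have hcmn : (((m : ℤ), (n : ℤ)) : ℤ × ℤ) ∈ X := by
    obtain ⟨c, hc, h1, h2⟩ := mem_verts_iff_s15.mp hmn
    have hb := hcellbox c hc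
    have : c = (((m : ℤ), (n : ℤ)) : ℤ × ℤ) := Prod.ext_iff.mpr (by simp at h1 h2 ⊢; omega)
    rwa [this] at hc
  -- existence of cells in every column and row
  have hcellx : ∀ x : ℤ, 1 ≤ x → x ≤ (m : ℤ) → ∃ e ∈ X, e.1 = x := by
    intro x h1 h2
    exact rtg_proj Prod.fst (fun a b h => by unfold Adj at h; omega)
      (hXconn _ hc11 _ hcmn) hc11 x (by simpa using h1) (by simpa using h2)
  have hcelly : ∀ y : ℤ, 1 ≤ y → y ≤ (n : ℤ) → ∃ e ∈ X, e.2 = y := by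
    intro y h1 h2
    exact rtg_proj Prod.snd (fun a b h => by unfold Adj at h; omega)
      (hXconn _ hc11 _ hcmn) hc11 y (by simpa using h1) (by simpa using h2)
  -- finiteness of the vertex set
  have hVfin : (Verts X).Finite := by
    have : Verts X ⊆ ↑(X.biUnion fun c =>
        {c, (c.1 - 1, c.2), (c.1, c.2 - 1), (c.1 - 1, c.2 - 1)}) := by
      intro v hv
      obtain ⟨c, hc, h1, h2⟩ := mem_verts_iff_s15.mp hv
      simp only [Finset.coe_biUnion, Finset.mem_coe, Set.mem_iUnion]
      refine ⟨c, hc, ?_⟩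
      have : v = (v.1, v.2) := rfl
      simp only [Finset.mem_insert, Finset.mem_singleton]
      rcases h1 with h1 | h1 <;> rcases h2 with h2 | h2
      · exact Or.inl (Prod.ext_iff.mpr ⟨h1, h2⟩)
      · exact Or.inr (Or.inr (Or.inl (Prod.ext_iff.mpr (by simpa using ⟨h1, h2⟩))))
      · exact Or.inr (Or.inl (Prod.ext_iff.mpr (by simpa using ⟨h1, h2⟩)))
      · exact Or.inr (Or.inr (Or.inr (Prod.ext_iff.mpr (by simpa using ⟨h1, h2⟩))))
    exact Set.Finite.subset (Finset.finite_toSet _) this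
  -- column-minimal and row-minimal vertices
  set A : Set (ℤ × ℤ) :=
    {p | p ∈ Verts X ∧ 1 ≤ p.1 ∧ ∀ b : ℤ, b < p.2 → (p.1, b) ∉ Verts X} with hAdef
  set B : Set (ℤ × ℤ) :=
    {p | p ∈ Verts X ∧ 1 ≤ p.2 ∧ ∀ a : ℤ, a < p.1 → (a, p.2) ∉ Verts X} with hBdef
  -- JoinIrr X = A ∪ B
  have hJI : JoinIrr X = A ∪ B := by
    ext p
    constructor
    · rintro ⟨hpV, ⟨q, hqV, hqp⟩, hirr⟩
      have h0p : ((0, 0) : ℤ × ℤ) < p := lt_of_le_of_lt (hbox q hqV).1 hqp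
      have h0le : ((0 : ℤ), (0 : ℤ)) ≤ p := h0p.le
      rw [Prod.le_def] at h0le
      have hpne : ¬ (p.1 = 0 ∧ p.2 = 0) := by
        intro h
        exact absurd (Prod.ext_iff.mpr ⟨h.1.symm, h.2.symm⟩ : ((0,0) : ℤ × ℤ) = p) h0p.ne
      by_cases hcol : ∀ b : ℤ, b < p.2 → (p.1, b) ∉ Verts X
      · left
        refine ⟨hpV, ?_, hcol⟩
        by_contra h
        have hp1 : p.1 = 0 := by omega
        have hp2 : (0 : ℤ) < p.2 := by omega
        exact hcol 0 hp2 (by rw [hp1]; exact h0)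
      · right
        push_neg at hcol
        obtain ⟨b, hb, hbV⟩ := hcol
        have hbnn : 0 ≤ b := (hvbox _ hbV).2.1
        have hrow : ∀ a : ℤ, a < p.1 → (a, p.2) ∉ Verts X := by
          intro a ha haV
          refine hirr _ hbV _ haV ?_ ?_ ?_
          · exact lt_of_le_of_ne (Prod.le_def.mpr ⟨le_refl _, hb.le⟩)
              (fun h => by rw [Prod.ext_iff] at h; simp at h; omega)
          · exact lt_of_le_of_ne (Prod.le_def.mpr ⟨ha.le, le_refl _⟩)
              (fun h => by rw [Prod.ext_iff] at h; simp at h; omega)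
          · rw [Prod.mk_sup_mk, sup_eq_left.mpr ha.le, sup_eq_right.mpr hb.le]
        exact ⟨hpV, by omega, hrow⟩
    · have key : ∀ a ∈ Verts X, ∀ c ∈ Verts X, a < p → c < p → a ⊔ c = p →
        (a.1 = p.1 ∧ a.2 < p.2) ∨ (c.1 = p.1 ∧ c.2 < p.2) := by
        intro a haV c hcV hap hcp hsup
        have ha' := hap.le; have hc' := hcp.le
        rw [Prod.le_def] at ha' hc'
        have hane : ¬ (a.1 = p.1 ∧ a.2 = p.2) :=
          fun h => hap.ne (Prod.ext_iff.mpr ⟨h.1, h.2⟩)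
        have hcne : ¬ (c.1 = p.1 ∧ c.2 = p.2) :=
          fun h => hcp.ne (Prod.ext_iff.mpr ⟨h.1, h.2⟩)
        have h1 : a.1 ⊔ c.1 = p.1 := by rw [← Prod.fst_sup, hsup]
        have h2 : a.2 ⊔ c.2 = p.2 := by rw [← Prod.snd_sup, hsup]
        rcases le_total a.1 c.1 with h | h <;> rcases le_total a.2 c.2 with h' | h'
        · rw [sup_eq_right.mpr h] at h1; rw [sup_eq_right.mpr h'] at h2; omega
        · rw [sup_eq_right.mpr h] at h1; rw [sup_eq_left.mpr h'] at h2; omega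
        · rw [sup_eq_left.mpr h] at h1; rw [sup_eq_right.mpr h'] at h2; omega
        · rw [sup_eq_left.mpr h] at h1; rw [sup_eq_left.mpr h'] at h2; omega
      rintro (⟨hpV, hp1, hmin⟩ | ⟨hpV, hp2, hmin⟩)
      · refine ⟨hpV, ⟨(0, 0), h0, ?_⟩, ?_⟩
        · refine lt_of_le_of_ne (hbox p hpV).1 (fun h => ?_)
          rw [Prod.ext_iff] at h; simp at h; omega
        · intro a haV c hcV hap hcp hsup
          rcases key a haV c hcV hap hcp hsup with ⟨h1, h2⟩ | ⟨h1, h2⟩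
          · exact hmin a.2 h2 (by rw [← h1]; exact haV)
          · exact hmin c.2 h2 (by rw [← h1]; exact hcV)
      · refine ⟨hpV, ⟨(0, 0), h0, ?_⟩, ?_⟩
        · refine lt_of_le_of_ne (hbox p hpV).1 (fun h => ?_)
          rw [Prod.ext_iff] at h; simp at h; omega
        · intro a haV c hcV hap hcp hsup
          have key2 : (a.2 = p.2 ∧ a.1 < p.1) ∨ (c.2 = p.2 ∧ c.1 < p.1) := by
            have ha' := hap.le; have hc' := hcp.le
            rw [Prod.le_def] at ha' hc'
            have hane : ¬ (a.1 = p.1 ∧ a.2 = p.2) :=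
              fun h => hap.ne (Prod.ext_iff.mpr ⟨h.1, h.2⟩)
            have hcne : ¬ (c.1 = p.1 ∧ c.2 = p.2) :=
              fun h => hcp.ne (Prod.ext_iff.mpr ⟨h.1, h.2⟩)
            have h1 : a.1 ⊔ c.1 = p.1 := by rw [← Prod.fst_sup, hsup]
            have h2 : a.2 ⊔ c.2 = p.2 := by rw [← Prod.snd_sup, hsup]
            rcases le_total a.1 c.1 with h | h <;> rcases le_total a.2 c.2 with h' | h'
            · rw [sup_eq_right.mpr h] at h1; rw [sup_eq_right.mpr h'] at h2; omega
            · rw [sup_eq_right.mpr h] at h1; rw [sup_eq_left.mpr h'] at h2; omega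
            · rw [sup_eq_left.mpr h] at h1; rw [sup_eq_right.mpr h'] at h2; omega
            · rw [sup_eq_left.mpr h] at h1; rw [sup_eq_left.mpr h'] at h2; omega
          rcases key2 with ⟨h1, h2⟩ | ⟨h1, h2⟩
          · exact hmin a.1 h2 (by rw [← h1]; exact haV)
          · exact hmin c.1 h2 (by rw [← h1]; exact hcV)
  -- A and B are disjoint
  have hdisj : Disjoint A B := by
    rw [Set.disjoint_left]
    rintro p ⟨hpV, hp1, hcol⟩ ⟨-, hp2, hrow⟩
    have hbx := hvbox p hpV
    obtain ⟨c, hc, h1, h2⟩ := mem_verts_iff_s15.mp hpV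
    have hcb := hcellbox c hc
    rcases h2 with h2 | h2
    · -- v.2 = c.2 : the corner (p.1, c.2 - 1) is a vertex below p in its column
      exact hcol (p.2 - 1) (by omega) (hcorn c hc _ (by simp; omega) (Or.inr (by omega)))
    · rcases h1 with h1 | h1
      · -- p = (c.1, c.2 - 1) : corner (c.1 - 1, p.2) is a vertex left of p in its row
        exact hrow (p.1 - 1) (by omega) (hcorn c hc _ (Or.inr (by omega)) (by simp; omega))
      · -- p = c - (1,1) : use the lattice meet
        -- the vertex (p.1, p.2 + 1) = (c.1 - 1, c.2)
        have hu : ((p.1, p.2 + 1) : ℤ × ℤ) ∈ Verts X :=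
          hcorn c hc _ (Or.inr (by omega)) (Or.inl (by omega))
        -- a cell d in row p.2
        obtain ⟨d, hd, hdy⟩ := hcelly p.2 (by omega) (by omega)
        have hw1 : ((d.1 - 1, p.2) : ℤ × ℤ) ∈ Verts X :=
          hcorn d hd _ (Or.inr rfl) (Or.inl (by omega))
        have hw2 : ((d.1, p.2 - 1) : ℤ × ℤ) ∈ Verts X :=
          hcorn d hd _ (Or.inl rfl) (Or.inr (by omega))
        have hd1 : p.1 ≤ d.1 - 1 := by
          by_contra h
          exact hrow (d.1 - 1) (by omega) hw1
        have hmeet := (hsl _ hu _ hw2).2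
        rw [Prod.mk_inf_mk, inf_eq_left.mpr (by omega : p.1 ≤ d.1),
          inf_eq_right.mpr (by omega : p.2 - 1 ≤ p.2 + 1)] at hmeet
        exact hcol (p.2 - 1) (by omega) hmeet
  have hAfin : A.Finite := hVfin.subset (fun p hp => hp.1)
  have hBfin : B.Finite := hVfin.subset (fun p hp => hp.1)
  -- counting A
  have hinjA : Set.InjOn Prod.fst A := by
    rintro p ⟨hpV, -, hpmin⟩ q ⟨hqV, -, hqmin⟩ h
    rcases lt_trichotomy p.2 q.2 with h' | h' | h'
    · exfalso
      apply hqmin p.2 h'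
      have he : ((q.1, p.2) : ℤ × ℤ) = p := Prod.ext_iff.mpr ⟨h.symm, rfl⟩
      rw [he]; exact hpV
    · exact Prod.ext_iff.mpr ⟨h, h'⟩
    · exfalso
      apply hpmin q.2 h'
      have he : ((p.1, q.2) : ℤ × ℤ) = q := Prod.ext_iff.mpr ⟨h, rfl⟩
      rw [he]; exact hqV
  have himA : Prod.fst '' A = Set.Icc (1 : ℤ) (m : ℤ) := by
    ext x
    constructor
    · rintro ⟨p, ⟨hpV, hp1, -⟩, rfl⟩
      exact ⟨hp1, (hvbox p hpV).2.2.1⟩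
    · rintro ⟨hx1, hx2⟩
      obtain ⟨e, he, hex⟩ := hcellx x hx1 hx2
      have hxne : ∃ b : ℤ, ((x, b) : ℤ × ℤ) ∈ Verts X :=
        ⟨e.2, hcorn e he _ (Or.inl hex.symm) (Or.inl rfl)⟩
      obtain ⟨lb, hlbV, hlb⟩ := Int.exists_least_of_bdd
        (P := fun b => ((x, b) : ℤ × ℤ) ∈ Verts X)
        ⟨0, fun z hz => (hvbox _ hz).2.1⟩ hxne
      refine ⟨(x, lb), ⟨hlbV, hx1, fun b hb hbV => ?_⟩, rfl⟩
      exact absurd (hlb b hbV) (by omega)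
  have hinjB : Set.InjOn Prod.snd B := by
    rintro p ⟨hpV, -, hpmin⟩ q ⟨hqV, -, hqmin⟩ h
    rcases lt_trichotomy p.1 q.1 with h' | h' | h'
    · exfalso
      apply hqmin p.1 h'
      have he : ((p.1, q.2) : ℤ × ℤ) = p := Prod.ext_iff.mpr ⟨rfl, h.symm⟩
      rw [he]; exact hpV
    · exact Prod.ext_iff.mpr ⟨h', h⟩
    · exfalso
      apply hpmin q.1 h'
      have he : ((q.1, p.2) : ℤ × ℤ) = q := Prod.ext_iff.mpr ⟨rfl, h⟩
      rw [he]; exact hqV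
  have himB : Prod.snd '' B = Set.Icc (1 : ℤ) (n : ℤ) := by
    ext y
    constructor
    · rintro ⟨p, ⟨hpV, hp2, -⟩, rfl⟩
      exact ⟨hp2, (hvbox p hpV).2.2.2⟩
    · rintro ⟨hy1, hy2⟩
      obtain ⟨e, he, hey⟩ := hcelly y hy1 hy2
      have hyne : ∃ a : ℤ, ((a, y) : ℤ × ℤ) ∈ Verts X :=
        ⟨e.1, hcorn e he _ (Or.inl rfl) (Or.inl hey.symm)⟩
      obtain ⟨lb, hlbV, hlb⟩ := Int.exists_least_of_bdd
        (P := fun a => ((a, y) : ℤ × ℤ) ∈ Verts X)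
        ⟨0, fun z hz => (hvbox _ hz).1⟩ hyne
      refine ⟨(lb, y), ⟨hlbV, hy1, fun a ha haV => ?_⟩, rfl⟩
      exact absurd (hlb a haV) (by omega)
  have hcardIcc : ∀ k : ℕ, (Set.Icc (1 : ℤ) (k : ℤ)).ncard = k := by
    intro k
    rw [← Finset.coe_Icc, Set.ncard_coe_finset, Int.card_Icc]
    omega
  have hAcard : A.ncard = m := by
    rw [← Set.ncard_image_of_injOn hinjA, himA, hcardIcc]
  have hBcard : B.ncard = n := by
    rw [← Set.ncard_image_of_injOn hinjB, himB, hcardIcc]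
  rw [hJI, Set.ncard_union_eq hdisj hAfin hBfin, hAcard, hBcard]
end
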